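/- Let ρ : M_J(ℂ) → M_n(ℂ) be a unital 2-positive map, τ the normalized trace on M_n(ℂ), u ∈ M_n(ℂ) unitary, 0 < ε < 1/2, and x ∈ M_J(ℂ) a contraction with ‖u − ρ(x)‖₂ < ε. Then for every unitary v₀ ∈ M_J(ℂ) with x = v₀|x|, we have ‖u − ρ(v₀)‖₂ < 3ε^{1/2}. -/

import Mathlib

/-!
With the Frobenius norm, `‖a‖₂ = ‖a‖ / √n`. Kadison–Schwarz for the unital 2-positive map gives
`‖ρ x‖₂² ≤ τ(ρ(x*x))`, and `‖ρ x‖₂ ≥ ‖u‖₂ - ε = 1 - ε`, so `τ(ρ(x*x)) ≥ (1 - ε)² > 1 - 2ε`.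
Since `x - v₀ = v₀(|x| - 1)` and `0 ≤ |x| ≤ 1`, we have
`(x - v₀)*(x - v₀) = (1 - |x|)² ≤ 1 - |x|² = 1 - x*x`, and Kadison–Schwarz again gives
`‖ρ x - ρ v₀‖₂² ≤ 1 - τ(ρ(x*x)) < 2ε`. The triangle inequality finishes, as
`ε + (2ε)^{1/2} < 3ε^{1/2}`.
-/

open ComplexOrder

/-- A linear map between matrix algebras is 2-positive if its amplification to
2×2 block matrices preserves positive semidefiniteness. -/
def TwoPositive {J n : ℕ}
    (ρ : Matrix (Fin J) (Fin J) ℂ →ₗ[ℂ] Matrix (Fin n) (Fin n) ℂ) : Prop :=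
  ∀ a : Matrix (Fin 2 × Fin J) (Fin 2 × Fin J) ℂ, a.PosSemidef →
    (Matrix.of fun p q : Fin 2 × Fin n =>
      ρ (Matrix.of fun i j => a (p.1, i) (q.1, j)) p.2 q.2).PosSemidef

open Matrix

attribute [local instance] Matrix.frobeniusNormedAddCommGroup

section CStarAlgebra

variable {A : Type*} [CStarAlgebra A] [PartialOrder A] [StarOrderedRing A]

lemma sub_mul_self_nonneg_of_mul_self_le_one {p : A} (hp : 0 ≤ p) (h : p * p ≤ 1) :
    0 ≤ p - p * p := by
  have hp1 : p ≤ 1 := by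
    simpa [CFC.sqrt_mul_self p hp] using CFC.sqrt_le_sqrt _ _ h
  rw [← mul_one_sub]
  exact Commute.mul_nonneg hp (sub_nonneg.2 hp1) ((Commute.one_right p).sub_right (.refl p))

lemma star_sub_mul_sub_le_of_polar {x v p : A} (hv : star v * v = 1) (hp : 0 ≤ p)
    (hpsq : p * p = star x * x) (hx : star x * x ≤ 1) (hpolar : x = v * p) :
    star (x - v) * (x - v) ≤ 1 - star x * x := by
  have hdiff : star (x - v) * (x - v) = (1 - p) * (1 - p) := by
    have hxv : x - v = v * (p - 1) := by rw [hpolar]; noncomm_ring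
    rw [hxv, star_mul, mul_assoc, ← mul_assoc (star v), hv, one_mul, star_sub, star_one,
      hp.isSelfAdjoint.star_eq]
    noncomm_ring
  rw [hdiff, ← hpsq, ← sub_nonneg]
  have := sub_mul_self_nonneg_of_mul_self_le_one hp (hpsq ▸ hx)
  convert add_nonneg this this using 1
  noncomm_ring

end CStarAlgebra

open scoped MatrixOrder Matrix.Norms.L2Operator in
lemma Matrix.posSemidef_one_sub_sub_of_polar {m : Type*} [Fintype m] [DecidableEq m]
    {x v p : Matrix m m ℂ} (hv : star v * v = 1) (hp : p.PosSemidef)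
    (hpsq : p * p = star x * x) (hx : (1 - star x * x).PosSemidef) (hpolar : x = v * p) :
    (1 - star x * x - star (x - v) * (x - v)).PosSemidef :=
  le_iff.mp <| star_sub_mul_sub_le_of_polar hv hp.nonneg hpsq (le_iff.mpr hx) hpolar

lemma Matrix.posSemidef_blockGram {k m 𝕜 : Type*} [Fintype k] [Fintype m] [RCLike 𝕜]
    (f : k → Matrix m m 𝕜) :
    (of fun p q : k × m => ((f p.1)ᴴ * f q.1) p.2 q.2).PosSemidef := by
  convert posSemidef_conjTranspose_mul_self (of fun r (q : k × m) => f q.1 r q.2) using 1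
  ext p q
  simp [mul_apply]

lemma Matrix.re_trace_conjTranspose_mul_self {m n 𝕜 : Type*} [Fintype m] [Fintype n]
    [RCLike 𝕜] (a : Matrix m n 𝕜) : RCLike.re (aᴴ * a).trace = ‖a‖ ^ 2 := by
  rw [frobenius_norm_def, ← Real.rpow_natCast, ← Real.rpow_mul (by positivity), Finset.sum_comm]
  simp [trace, mul_apply, RCLike.norm_sq_eq_def]

lemma Matrix.norm_eq_sqrt_card_of_star_mul_self_eq_one {m 𝕜 : Type*} [Fintype m]
    [DecidableEq m] [RCLike 𝕜] {u : Matrix m m 𝕜} (hu : star u * u = 1) : ‖u‖ = √(Fintype.card m) := by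
  rw [← Real.sqrt_sq (norm_nonneg u), ← re_trace_conjTranspose_mul_self, ← star_eq_conjTranspose,
    hu, trace_one]
  simp

lemma Matrix.sqrt_re_trace_star_mul_self_div {n : ℕ} (a : Matrix (Fin n) (Fin n) ℂ) :
    √((trace (star a * a) / n).re) = ‖a‖ / √n := by
  have h := re_trace_conjTranspose_mul_self a
  rw [RCLike.re_to_complex] at h
  rw [Complex.div_natCast_re, star_eq_conjTranspose, h, Real.sqrt_div' _ (Nat.cast_nonneg n),
    Real.sqrt_sq (norm_nonneg a)]

namespace TwoPositive

variable {J n : ℕ} {ρ : Matrix (Fin J) (Fin J) ℂ →ₗ[ℂ] Matrix (Fin n) (Fin n) ℂ}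

lemma posSemidef_map_blockGram (hρ : TwoPositive ρ) (f : Fin 2 → Matrix (Fin J) (Fin J) ℂ) :
    (of fun p q : Fin 2 × Fin n => ρ ((f p.1)ᴴ * f q.1) p.2 q.2).PosSemidef :=
  hρ _ (posSemidef_blockGram f)

lemma map_conjTranspose (hρ : TwoPositive ρ) (a : Matrix (Fin J) (Fin J) ℂ) :
    ρ aᴴ = (ρ a)ᴴ := by
  ext i j
  simpa using ((hρ.posSemidef_map_blockGram ![1, a]).isHermitian.apply (1, i) (0, j)).symm

open scoped MatrixOrder in
lemma map_posSemidef (hρ : TwoPositive ρ) {a : Matrix (Fin J) (Fin J) ℂ} (ha : a.PosSemidef) :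
    (ρ a).PosSemidef := by
  obtain ⟨b, rfl⟩ := CStarAlgebra.nonneg_iff_eq_star_mul_self.mp ha.nonneg
  exact (hρ.posSemidef_map_blockGram ![b, 0]).submatrix fun i => (0, i)

lemma kadison_schwarz (hρ : TwoPositive ρ) (h1 : ρ 1 = 1) (a : Matrix (Fin J) (Fin J) ℂ) :
    (ρ (aᴴ * a) - (ρ a)ᴴ * ρ a).PosSemidef := by
  have hblock : (fromBlocks 1 (ρ a) (ρ a)ᴴ (ρ (aᴴ * a))).PosSemidef := by
    convert (hρ.posSemidef_map_blockGram ![1, a]).submatrix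
      (Sum.elim (fun i => (0, i)) (fun i => (1, i))) using 1
    ext (i | i) (j | j) <;> simp [h1, ← hρ.map_conjTranspose]
  let _ : Invertible (1 : Matrix (Fin n) (Fin n) ℂ) := invertibleOne
  simpa using (PosDef.fromBlocks₁₁ (ρ a) (ρ (aᴴ * a)) PosDef.one).mp hblock

lemma norm_map_sq_le (hρ : TwoPositive ρ) (h1 : ρ 1 = 1) (a : Matrix (Fin J) (Fin J) ℂ) :
    ‖ρ a‖ ^ 2 ≤ (ρ (aᴴ * a)).trace.re := by
  have := (Complex.le_def.mp (hρ.kadison_schwarz h1 a).trace_nonneg).1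
  have h := re_trace_conjTranspose_mul_self (ρ a)
  rw [RCLike.re_to_complex] at h
  rw [trace_sub, Complex.sub_re, h, Complex.zero_re, sub_nonneg] at this
  exact this

lemma norm_map_sub_map_sq_le (hρ : TwoPositive ρ) (h1 : ρ 1 = 1)
    {x y : Matrix (Fin J) (Fin J) ℂ} (h : (1 - xᴴ * x - (x - y)ᴴ * (x - y)).PosSemidef) :
    ‖ρ x - ρ y‖ ^ 2 ≤ n - (ρ (xᴴ * x)).trace.re := by
  have hpos := (Complex.le_def.mp (hρ.map_posSemidef h).trace_nonneg).1
  rw [map_sub, map_sub, h1, trace_sub, trace_sub, trace_one, Fintype.card_fin] at hpos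
  simp only [Complex.sub_re, Complex.natCast_re, Complex.zero_re] at hpos
  rw [← map_sub]
  linarith [hρ.norm_map_sq_le h1 (x - y)]

end TwoPositive

lemma add_sqrt_two_mul_lt_three_mul_sqrt {ε : ℝ} (h0 : 0 < ε) (h1 : ε ≤ 1) :
    ε + √(2 * ε) < 3 * √ε := by
  have hε : ε ≤ √ε := Real.le_sqrt_of_sq_le (by nlinarith)
  have h2 : √2 < 2 := by
    rw [Real.sqrt_lt' two_pos]
    norm_num
  rw [Real.sqrt_mul zero_le_two]
  nlinarith [Real.sqrt_pos.mpr h0]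

theorem stmt9_general {J n : ℕ} (hn : 0 < n)
    (ρ : Matrix (Fin J) (Fin J) ℂ →ₗ[ℂ] Matrix (Fin n) (Fin n) ℂ)
    (hunital : ρ 1 = 1) (h2pos : TwoPositive ρ)
    (u : Matrix (Fin n) (Fin n) ℂ) (hu : star u * u = 1)
    (x v₀ p : Matrix (Fin J) (Fin J) ℂ)
    (hx : (1 - star x * x).PosSemidef)
    (hv₀ : star v₀ * v₀ = 1)
    (hp : p.PosSemidef) (hpsq : p * p = star x * x) (hpolar : x = v₀ * p)
    (ε : ℝ) (hε : 0 < ε) (hε' : ε < 1 / 2)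
    (hclose : Real.sqrt (((Matrix.trace (star (u - ρ x) * (u - ρ x))) / n).re) < ε) :
    Real.sqrt (((Matrix.trace (star (u - ρ v₀) * (u - ρ v₀))) / n).re)
      < 3 * Real.sqrt ε := by
  have hsqrt_n : 0 < √(n : ℝ) := by positivity
  rw [sqrt_re_trace_star_mul_self_div, div_lt_iff₀ hsqrt_n] at hclose ⊢
  have hρx : (1 - ε) * √n ≤ ‖ρ x‖ := by
    have := norm_sub_norm_le u (u - ρ x)
    rw [sub_sub_cancel, norm_eq_sqrt_card_of_star_mul_self_eq_one hu, Fintype.card_fin] at this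
    linarith
  have htrace : (1 - ε) ^ 2 * n ≤ (ρ (xᴴ * x)).trace.re := by
    have := pow_le_pow_left₀ (by nlinarith) hρx 2
    rw [mul_pow, Real.sq_sqrt (Nat.cast_nonneg n)] at this
    exact this.trans (h2pos.norm_map_sq_le hunital x)
  have hdist : ‖ρ x - ρ v₀‖ ≤ √(2 * ε) * √n := by
    rw [← Real.sqrt_mul (by positivity)]
    refine Real.le_sqrt_of_sq_le ?_
    have := h2pos.norm_map_sub_map_sq_le hunital
      (posSemidef_one_sub_sub_of_polar hv₀ hp hpsq hx hpolar)
    nlinarith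
  calc ‖u - ρ v₀‖ ≤ ‖u - ρ x‖ + ‖ρ x - ρ v₀‖ := norm_sub_le_norm_sub_add_norm_sub _ _ _
    _ < (ε + √(2 * ε)) * √n := by linarith
    _ < 3 * √ε * √n := by
      gcongr
      exact add_sqrt_two_mul_lt_three_mul_sqrt hε (by linarith)

/-- Kishimoto's lemma: if ρ is unital 2-positive, u unitary, x a contraction
with ‖u − ρ(x)‖₂ < ε < 1/2, and x = v₀|x| with v₀ unitary, then
‖u − ρ(v₀)‖₂ < 3ε^{1/2}. -/
theorem stmt9 {J n : ℕ} (hn : 0 < n)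
    (ρ : Matrix (Fin J) (Fin J) ℂ →ₗ[ℂ] Matrix (Fin n) (Fin n) ℂ)
    (hunital : ρ 1 = 1) (h2pos : TwoPositive ρ)
    (u : Matrix (Fin n) (Fin n) ℂ) (hu : star u * u = 1) (hu' : u * star u = 1)
    (x v₀ p : Matrix (Fin J) (Fin J) ℂ)
    (hx : (1 - star x * x).PosSemidef)
    (hv₀ : star v₀ * v₀ = 1) (hv₀' : v₀ * star v₀ = 1)
    (hp : p.PosSemidef) (hpsq : p * p = star x * x) (hpolar : x = v₀ * p)
    (ε : ℝ) (hε : 0 < ε) (hε' : ε < 1 / 2)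
    (hclose : Real.sqrt (((Matrix.trace (star (u - ρ x) * (u - ρ x))) / n).re) < ε) :
    Real.sqrt (((Matrix.trace (star (u - ρ v₀) * (u - ρ v₀))) / n).re)
      < 3 * Real.sqrt ε :=
  stmt9_general hn ρ hunital h2pos u hu x v₀ p hx hv₀ hp hpsq hpolar ε hε hε' hclose
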